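/- For every integer n ≥ 1, the equality of ideals ⋂_{i=1}^{n} J̃_{0i} = ∏_{i=1}^{n} J̃_{0i} holds in the quotient ring T_n/J^{(2)}_{0n}. -/

import Mathlib

open scoped TensorProduct
open PiTensorProduct

noncomputable section

variable (R B : Type*) [CommRing R] [CommRing B] [Algebra R B]

/-- The `(n+1)`-fold tensor power `B ⊗_R ⋯ ⊗_R B`, with factors indexed by `Fin (n+1)`. -/
abbrev TT (n : ℕ) : Type _ := ⨂[R] _ : Fin (n + 1), B

/-- `d^{r,s} b = (1 ⊗ ⋯ ⊗ b ⊗ ⋯ ⊗ 1) - (1 ⊗ ⋯ ⊗ b ⊗ ⋯ ⊗ 1)`, with `b` in position `s`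
(resp. `r`) in the two elementary tensors. -/
def dd (n : ℕ) (r s : Fin (n + 1)) (b : B) : TT R B n :=
  tprod R (fun i => if i = s then b else 1) - tprod R (fun i => if i = r then b else 1)

/-- The ideal `J_{rs}` generated by the elements `d^{r,s} b`. -/
def Jrs (n : ℕ) (r s : Fin (n + 1)) : Ideal (TT R B n) :=
  Ideal.span {x | ∃ b : B, x = dd R B n r s b}

/-- The ideal `J^{(2)}_{0n} = Σ_{0 ≤ r < s ≤ n} J_{rs}²`. -/
def Jsq (n : ℕ) : Ideal (TT R B n) :=
  ⨆ (r : Fin (n + 1)) (s : Fin (n + 1)) (_ : r < s), (Jrs R B n r s) ^ 2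

/-- The image `J̃_{rs}` of the ideal `J_{rs}` in the quotient ring `T_n / J^{(2)}_{0n}`. -/
def Jt (n : ℕ) (r s : Fin (n + 1)) : Ideal (TT R B n ⧸ Jsq R B n) :=
  (Jrs R B n r s).map (Ideal.Quotient.mk (Jsq R B n))

/-! ### Auxiliary machinery -/

section Aux

variable (n : ℕ)

/-- The canonical embedding of `B` into slot `j` of the tensor power. -/
def sa (j : Fin (n + 1)) : B →ₐ[R] TT R B n :=
  PiTensorProduct.singleAlgHom (R := R) (A := fun _ : Fin (n + 1) => B) j

lemma sa_apply (j : Fin (n + 1)) (b : B) :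
    sa R B n j b = tprod R (fun k => if k = j then b else 1) := by
  simp only [sa, PiTensorProduct.singleAlgHom_apply]
  congr 1
  funext k
  rw [MonoidHom.mulSingle_apply, Pi.mulSingle_apply]

lemma dd_eq (r s : Fin (n + 1)) (b : B) :
    dd R B n r s b = sa R B n s b - sa R B n r b := by
  rw [dd, sa_apply, sa_apply]

lemma dd_self (r : Fin (n + 1)) (b : B) : dd R B n r r b = 0 := sub_self _

/-- The index substitution sending `i` to `0` and fixing everything else. -/
def sg (i j : Fin (n + 1)) : Fin (n + 1) := if j = i then 0 else j

lemma sg_zero (i : Fin (n + 1)) : sg n i 0 = 0 := by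
  simp [sg]

lemma sg_self (i : Fin (n + 1)) : sg n i i = 0 := if_pos rfl

lemma sg_of_ne (i j : Fin (n + 1)) (h : j ≠ i) : sg n i j = j := if_neg h

/-- The algebra endomorphism of `T_n` which multiplies the `i`-th factor into the `0`-th. -/
def Phi (i : Fin (n + 1)) : TT R B n →ₐ[R] TT R B n :=
  PiTensorProduct.liftAlgHom
    ((MultilinearMap.mkPiAlgebra R (Fin (n + 1)) (TT R B n)).compLinearMap
      (fun j => (sa R B n (sg n i j)).toLinearMap))
    (by simp [_root_.map_one])
    (by
      intro x y
      simp [_root_.map_mul, Finset.prod_mul_distrib])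

lemma Phi_tprod (i : Fin (n + 1)) (f : Fin (n + 1) → B) :
    Phi R B n i (tprod R f) = ∏ j, sa R B n (sg n i j) (f j) := by
  simp [Phi, PiTensorProduct.liftAlgHom]

lemma Phi_sa (i j : Fin (n + 1)) (b : B) :
    Phi R B n i (sa R B n j b) = sa R B n (sg n i j) b := by
  rw [sa_apply, Phi_tprod, Finset.prod_eq_single j]
  · rw [if_pos rfl]
  · intro k _ hk
    rw [if_neg hk, _root_.map_one]
  · intro h
    exact absurd (Finset.mem_univ j) h

lemma Phi_dd (i r s : Fin (n + 1)) (b : B) :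
    Phi R B n i (dd R B n r s b) = dd R B n (sg n i r) (sg n i s) b := by
  rw [dd_eq, map_sub, Phi_sa, Phi_sa, dd_eq]

lemma dd_mem_Jrs (r s : Fin (n + 1)) (b : B) : dd R B n r s b ∈ Jrs R B n r s :=
  Ideal.subset_span ⟨b, rfl⟩

lemma Jrs_symm (r s : Fin (n + 1)) : Jrs R B n r s = Jrs R B n s r := by
  have key : ∀ r s : Fin (n + 1), Jrs R B n r s ≤ Jrs R B n s r := by
    intro r s
    rw [Jrs, Ideal.span_le]
    rintro _ ⟨b, rfl⟩
    have : dd R B n r s b = -(dd R B n s r b) := by rw [dd, dd]; ring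
    rw [this]
    exact neg_mem (dd_mem_Jrs R B n s r b)
  exact le_antisymm (key r s) (key s r)

lemma Jrs_self (r : Fin (n + 1)) : Jrs R B n r r = ⊥ := by
  rw [eq_bot_iff, Jrs, Ideal.span_le]
  rintro _ ⟨b, rfl⟩
  rw [dd_self]
  exact Submodule.zero_mem ⊥

lemma sq_le_Jsq (r s : Fin (n + 1)) (h : r ≠ s) : Jrs R B n r s ^ 2 ≤ Jsq R B n := by
  rcases h.lt_or_gt with hlt | hlt
  · exact le_iSup_of_le r (le_iSup_of_le s (le_iSup_of_le hlt le_rfl))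
  · rw [Jrs_symm]
    exact le_iSup_of_le s (le_iSup_of_le r (le_iSup_of_le hlt le_rfl))

lemma map_Jrs_le (i r s : Fin (n + 1)) :
    Ideal.map (Phi R B n i) (Jrs R B n r s) ≤ Jrs R B n (sg n i r) (sg n i s) := by
  rw [Jrs, Ideal.map_span, Ideal.span_le]
  rintro _ ⟨x, ⟨b, rfl⟩, rfl⟩
  rw [Phi_dd]
  exact dd_mem_Jrs R B n _ _ b

lemma map_Jsq_le (i : Fin (n + 1)) :
    Ideal.map (Phi R B n i) (Jsq R B n) ≤ Jsq R B n := by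
  rw [Ideal.map_le_iff_le_comap, Jsq]
  refine iSup_le fun r => iSup_le fun s => iSup_le fun hrs => ?_
  rw [← Ideal.map_le_iff_le_comap, Ideal.map_pow]
  have h1 : Ideal.map (Phi R B n i) (Jrs R B n r s) ^ 2
      ≤ Jrs R B n (sg n i r) (sg n i s) ^ 2 := by
    rw [pow_two, pow_two]
    exact Ideal.mul_mono (map_Jrs_le R B n i r s) (map_Jrs_le R B n i r s)
  by_cases h : sg n i r = sg n i s
  · refine h1.trans ?_
    rw [h, Jrs_self, pow_two, Ideal.bot_mul]
    exact bot_le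
  · exact h1.trans (sq_le_Jsq R B n _ _ h)

lemma quot_comp_Phi (i : Fin (n + 1)) :
    (Ideal.Quotient.mkₐ R (Jrs R B n 0 i)).comp (Phi R B n i)
      = Ideal.Quotient.mkₐ R (Jrs R B n 0 i) := by
  apply PiTensorProduct.algHom_ext
  intro j
  ext b
  simp only [AlgHom.comp_apply]
  rw [show PiTensorProduct.singleAlgHom (R := R) (A := fun _ : Fin (n + 1) => B) j b
        = sa R B n j b from rfl, Phi_sa]
  by_cases h : j = i
  · subst h
    rw [sg_self]
    simp only [Ideal.Quotient.mkₐ_eq_mk]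
    rw [Ideal.Quotient.eq]
    have : sa R B n 0 b - sa R B n j b = -(dd R B n 0 j b) := by rw [dd_eq]; ring
    rw [this]
    exact neg_mem (dd_mem_Jrs R B n 0 j b)
  · rw [sg_of_ne n i j h]

lemma sub_Phi_mem (i : Fin (n + 1)) (x : TT R B n) :
    x - Phi R B n i x ∈ Jrs R B n 0 i := by
  have h := DFunLike.congr_fun (quot_comp_Phi R B n i) x
  simp only [AlgHom.comp_apply, Ideal.Quotient.mkₐ_eq_mk] at h
  exact Ideal.Quotient.eq.mp h.symm

/-- The induced endomorphism of the quotient ring. -/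
def phi (i : Fin (n + 1)) : (TT R B n ⧸ Jsq R B n) →+* (TT R B n ⧸ Jsq R B n) :=
  Ideal.quotientMap (Jsq R B n) (Phi R B n i).toRingHom
    (Ideal.map_le_iff_le_comap.mp (map_Jsq_le R B n i))

lemma phi_mk (i : Fin (n + 1)) (x : TT R B n) :
    phi R B n i (Ideal.Quotient.mk (Jsq R B n) x)
      = Ideal.Quotient.mk (Jsq R B n) (Phi R B n i x) :=
  Ideal.quotientMap_mk

lemma sub_phi_mem (i : Fin (n + 1)) (y : TT R B n ⧸ Jsq R B n) :
    y - phi R B n i y ∈ Jt R B n 0 i := by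
  obtain ⟨x, rfl⟩ := Ideal.Quotient.mk_surjective y
  rw [phi_mk, ← map_sub]
  exact Ideal.mem_map_of_mem _ (sub_Phi_mem R B n i x)

lemma phi_ker (i : Fin (n + 1)) :
    Jt R B n 0 i ≤ RingHom.ker (phi R B n i) := by
  rw [Jt, Jrs, Ideal.map_span, Ideal.span_le]
  rintro _ ⟨x, ⟨b, rfl⟩, rfl⟩
  simp only [SetLike.mem_coe, RingHom.mem_ker]
  rw [phi_mk, Phi_dd]
  have h0 : sg n i 0 = sg n i i := by
    rw [sg_self]; simp [sg]
  rw [h0, dd_self, map_zero]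

lemma mk_dd_mem_Jt (r s : Fin (n + 1)) (b : B) :
    Ideal.Quotient.mk (Jsq R B n) (dd R B n r s b) ∈ Jt R B n r s :=
  Ideal.mem_map_of_mem _ (dd_mem_Jrs R B n r s b)

lemma phi_maps_Jt (i j : Fin (n + 1)) (hj : j ≠ i) :
    ∀ y ∈ Jt R B n 0 j, phi R B n i y ∈ Jt R B n 0 j := by
  intro y hy
  have h : Jt R B n 0 j ≤ Ideal.comap (phi R B n i) (Jt R B n 0 j) := by
    rw [Jt, Jrs, Ideal.map_span, Ideal.span_le]
    rintro _ ⟨x, ⟨b, rfl⟩, rfl⟩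
    simp only [SetLike.mem_coe, Ideal.mem_comap]
    rw [phi_mk, Phi_dd]
    have h0 : sg n i 0 = 0 := by simp [sg]
    rw [h0, sg_of_ne n i j hj]
    exact Ideal.subset_span ⟨dd R B n 0 j b, ⟨b, rfl⟩, rfl⟩
  exact h hy

lemma L1 (i j : Fin (n + 1)) (hj : j ≠ i) :
    ∀ a ∈ Jt R B n 0 j, a - phi R B n i a ∈ Jt R B n 0 i * Jt R B n 0 j := by
  intro a ha
  have hspan : Jt R B n 0 j
      = Ideal.span ((Ideal.Quotient.mk (Jsq R B n)) '' {x | ∃ b : B, x = dd R B n 0 j b}) := by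
    rw [Jt, Jrs, Ideal.map_span]
  rw [hspan] at ha
  induction ha using Submodule.span_induction with
  | mem x hx =>
    obtain ⟨y, ⟨b, rfl⟩, rfl⟩ := hx
    have hfix : phi R B n i (Ideal.Quotient.mk (Jsq R B n) (dd R B n 0 j b))
        = Ideal.Quotient.mk (Jsq R B n) (dd R B n 0 j b) := by
      rw [phi_mk, Phi_dd]
      have h0 : sg n i 0 = 0 := by simp [sg]
      rw [h0, sg_of_ne n i j hj]
    rw [hfix, sub_self]
    exact Submodule.zero_mem _
  | zero => simp
  | add x y hx hy px py =>
    have : (x + y) - phi R B n i (x + y) = (x - phi R B n i x) + (y - phi R B n i y) := by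
      rw [_root_.map_add]; ring
    rw [this]
    exact add_mem px py
  | smul c x hx px =>
    have hx' : x ∈ Jt R B n 0 j := by rw [hspan]; exact hx
    have key : c • x - phi R B n i (c • x)
        = c * (x - phi R B n i x) + (c - phi R B n i c) * phi R B n i x := by
      rw [smul_eq_mul, _root_.map_mul]; ring
    rw [key]
    refine add_mem (Ideal.mul_mem_left _ _ px) ?_
    exact Ideal.mul_mem_mul (sub_phi_mem R B n i c) (phi_maps_Jt R B n i j hj x hx')

lemma Lt (i : Fin (n + 1)) :
    ∀ t : Finset (Fin (n + 1)), i ∉ t →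
      ∀ y ∈ ∏ j ∈ t, Jt R B n 0 j,
        y - phi R B n i y ∈ Jt R B n 0 i * ∏ j ∈ t, Jt R B n 0 j := by
  intro t
  induction t using Finset.induction_on with
  | empty =>
    intro _ y _
    rw [Finset.prod_empty, mul_one]
    exact sub_phi_mem R B n i y
  | @insert j t hj ih =>
    intro hit y hy
    have hji : j ≠ i := fun h => hit (h ▸ Finset.mem_insert_self j t)
    have hit' : i ∉ t := fun h => hit (Finset.mem_insert_of_mem h)
    rw [Finset.prod_insert hj] at hy ⊢
    refine Submodule.mul_induction_on hy ?_ ?_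
    · intro a ha b hb
      have h1 : a - phi R B n i a ∈ Jt R B n 0 i * Jt R B n 0 j := L1 R B n i j hji a ha
      have h2 : b - phi R B n i b ∈ Jt R B n 0 i * ∏ j ∈ t, Jt R B n 0 j := ih hit' b hb
      have h3 : phi R B n i a ∈ Jt R B n 0 j := phi_maps_Jt R B n i j hji a ha
      have key : a * b - phi R B n i (a * b)
          = (a - phi R B n i a) * b + phi R B n i a * (b - phi R B n i b) := by
        rw [_root_.map_mul]; ring
      rw [key]
      refine add_mem ?_ ?_
      · have h4 := Submodule.mul_mem_mul h1 hb
        rwa [mul_assoc] at h4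
      · have h4 := Submodule.mul_mem_mul h3 h2
        exact (mul_left_comm (Jt R B n 0 j) (Jt R B n 0 i) _).le h4
    · intro x y hx hy
      have key : (x + y) - phi R B n i (x + y)
          = (x - phi R B n i x) + (y - phi R B n i y) := by
        rw [_root_.map_add]; ring
      rw [key]
      exact add_mem hx hy

lemma inf_le_prod :
    ∀ s : Finset (Fin (n + 1)), (0 : Fin (n + 1)) ∉ s →
      (⨅ j ∈ s, Jt R B n 0 j) ≤ ∏ j ∈ s, Jt R B n 0 j := by
  intro s
  induction s using Finset.induction_on with
  | empty =>
    intro _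
    rw [Finset.prod_empty, Ideal.one_eq_top]
    exact le_top
  | @insert i t hit ih =>
    intro h0 x hx
    have h0t : (0 : Fin (n + 1)) ∉ t := fun h => h0 (Finset.mem_insert_of_mem h)
    simp only [Submodule.mem_iInf] at hx
    have hxi : x ∈ Jt R B n 0 i := hx i (Finset.mem_insert_self i t)
    have hxt : x ∈ ⨅ j ∈ t, Jt R B n 0 j := by
      simp only [Submodule.mem_iInf]
      exact fun j hj => hx j (Finset.mem_insert_of_mem hj)
    have hxP : x ∈ ∏ j ∈ t, Jt R B n 0 j := ih h0t hxt
    have hphi : phi R B n i x = 0 := RingHom.mem_ker.mp (phi_ker R B n i hxi)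
    have hfin := Lt R B n i t hit x hxP
    rw [hphi, sub_zero] at hfin
    rw [Finset.prod_insert hit]
    exact hfin

end Aux

/-- `⋂_{i=1}^{n} J̃_{0i} = ∏_{i=1}^{n} J̃_{0i}` in `T_n / J^{(2)}_{0n}`. -/
theorem stmt5 (n : ℕ) (hn : 1 ≤ n) :
    ⨅ i ∈ Finset.Ioi (0 : Fin (n + 1)), Jt R B n 0 i
      = ∏ i ∈ Finset.Ioi (0 : Fin (n + 1)), Jt R B n 0 i := by
  refine le_antisymm (inf_le_prod R B n _ (by simp)) ?_
  calc ∏ i ∈ Finset.Ioi (0 : Fin (n + 1)), Jt R B n 0 i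
      ≤ (Finset.Ioi (0 : Fin (n + 1))).inf (Jt R B n 0) := Ideal.prod_le_inf
  _ = ⨅ i ∈ Finset.Ioi (0 : Fin (n + 1)), Jt R B n 0 i := Finset.inf_eq_iInf _ _

end
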